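/- Let L be a simple split δ Jordan-Lie algebra with symmetric root system Λ. Then any two nonzero roots α, β ∈ Λ are connected. -/

import Mathlib

/-- A δ Jordan-Lie algebra: a vector space with a bilinear bracket satisfying
`[x,y] = -δ[y,x]` and `[x,[y,z]] = δ[[x,y],z] + δ[y,[x,z]]` with `δ = ±1`. -/
structure DeltaJordanLie (K L : Type*) [Field K] [AddCommGroup L] [Module K L] where
  br : L →ₗ[K] L →ₗ[K] L
  delta : K
  delta_pm : delta = 1 ∨ delta = -1
  anti : ∀ x y : L, br x y = -(delta • br y x)
  jacobi : ∀ x y z : L, br x (br y z) = delta • br (br x y) z + delta • br y (br x z)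

variable {K L : Type*} [Field K] [AddCommGroup L] [Module K L]

/-- The root space `L_α = {v ∈ L : [h,v] = α(h)v for all h ∈ H}`. -/
def DeltaJordanLie.rootSpace (J : DeltaJordanLie K L) (H : Submodule K L)
    (α : Module.Dual K H) : Submodule K L where
  carrier := {v : L | ∀ h : H, J.br (h : L) v = α h • v}
  zero_mem' := by intro h; simp
  add_mem' := by intro a b ha hb h; simp [ha h, hb h, smul_add]
  smul_mem' := by intro c a ha h; rw [map_smul, ha h, smul_comm]

/-- The root system `Λ = {α ∈ H* \ {0} : L_α ≠ 0}`. -/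
def DeltaJordanLie.roots (J : DeltaJordanLie K L) (H : Submodule K L) :
    Set (Module.Dual K H) :=
  {α | α ≠ 0 ∧ J.rootSpace H α ≠ ⊥}

/-- `H` is a splitting Cartan subalgebra: a maximal abelian subalgebra such that
`L` decomposes as the direct sum of the simultaneous eigenspaces `L_α`, with `L_0 = H`. -/
structure DeltaJordanLie.IsSplitting (J : DeltaJordanLie K L) (H : Submodule K L) : Prop where
  abelian : ∀ x ∈ H, ∀ y ∈ H, J.br x y = 0
  maximal : ∀ H' : Submodule K L, H ≤ H' →
      (∀ x ∈ H', ∀ y ∈ H', J.br x y = 0) → H' = H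
  zero_rootSpace : J.rootSpace H 0 = H
  indep : iSupIndep (fun α : Module.Dual K H => J.rootSpace H α)
  decomp : (⨆ α : Module.Dual K H, J.rootSpace H α) = ⊤

/-- The root system is symmetric. -/
def DeltaJordanLie.SymmetricRoots (J : DeltaJordanLie K L) (H : Submodule K L) : Prop :=
  ∀ α ∈ J.roots H, -α ∈ J.roots H

/-- The δ-twisted partial sums of a sequence of roots:
`s₀ = f 0`, `s_{k+1} = δ • (s_k + f (k+1))`, so that
`s_k = δ^k f 0 + δ^k f 1 + δ^{k-1} f 2 + ⋯ + δ f k`. -/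
def connSum {H : Submodule K L} (d : K) (f : ℕ → Module.Dual K H) : ℕ → Module.Dual K H
  | 0 => f 0
  | k + 1 => d • (connSum d f k + f (k + 1))

/-- `f 0, …, f n` is a connection from `α` to `β`: all terms are roots, `f 0 = α`,
all proper δ-twisted partial sums are roots, and the final sum is `±β`. -/
def IsConnection (J : DeltaJordanLie K L) (H : Submodule K L)
    (α β : Module.Dual K H) (n : ℕ) (f : ℕ → Module.Dual K H) : Prop :=
  (∀ i ≤ n, f i ∈ J.roots H) ∧ f 0 = α ∧
  (∀ k < n, connSum J.delta f k ∈ J.roots H) ∧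
  (connSum J.delta f n = β ∨ connSum J.delta f n = -β)

/-- `α` and `β` are connected. -/
def Connected (J : DeltaJordanLie K L) (H : Submodule K L)
    (α β : Module.Dual K H) : Prop :=
  ∃ n f, IsConnection J H α β n f

/-- `Λ_α`: the set of nonzero roots connected to `α`. -/
def connectedRoots (J : DeltaJordanLie K L) (H : Submodule K L)
    (α : Module.Dual K H) : Set (Module.Dual K H) :=
  {β ∈ J.roots H | Connected J H α β}

/-- An ideal of a δ Jordan-Lie algebra: a submodule with `[I,L] ⊆ I` and `[L,I] ⊆ I`. -/
def IsIdeal (J : DeltaJordanLie K L) (I : Submodule K L) : Prop :=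
  ∀ x ∈ I, ∀ y : L, J.br x y ∈ I ∧ J.br y x ∈ I

/-- `H_S = span{[L_β, L_{-β}] : β ∈ S}`. -/
def rootSpan (J : DeltaJordanLie K L) (H : Submodule K L)
    (S : Set (Module.Dual K H)) : Submodule K L :=
  Submodule.span K {z : L | ∃ β ∈ S, ∃ x ∈ J.rootSpace H β, ∃ y ∈ J.rootSpace H (-β),
    z = J.br x y}

/-- `L_S = H_S ⊕ V_S`, the subalgebra associated to a set of roots `S`. -/
def decIdeal (J : DeltaJordanLie K L) (H : Submodule K L)
    (S : Set (Module.Dual K H)) : Submodule K L :=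
  rootSpan J H S ⊔ ⨆ β ∈ S, J.rootSpace H β

/-!
Fix a root `α` and let `S = Λ_α`. The set `S` contains `α`, is closed under negation, under
`γ ↦ δ(γ + μ)` whenever this is a root, and conversely (`δ(σ + μ) ∈ S` forces `μ ∈ S`, by
appending the root `-δσ` to a connection). Hence for `γ ∈ S` and a root `μ ∉ S` we get
`[L_γ, L_μ] = 0`, and by the Jacobi identity also `[[L_γ, L_{-γ}], L_μ] = 0`. These facts make
`L_S = H_S ⊕ V_S` an ideal, which is nonzero as it contains `L_α`; by simplicity it is all of `L`.
But `L_S ⊆ H ⊕ ⨁_{γ ∈ S} L_γ`, so directness of the root space decomposition forces every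
root into `S`.
-/

namespace DeltaJordanLie

variable (J : DeltaJordanLie K L) {H : Submodule K L}

theorem delta_mul_self : J.delta * J.delta = 1 := by
  rcases J.delta_pm with h | h <;> rw [h] <;> norm_num

theorem delta_ne_zero : J.delta ≠ 0 := by
  rcases J.delta_pm with h | h <;> rw [h] <;> norm_num

theorem delta_smul_delta_smul {M : Type*} [MulAction K M] (x : M) :
    J.delta • J.delta • x = x := by
  rw [smul_smul, J.delta_mul_self, one_smul]

theorem delta_smul_mem_roots (hsym : J.SymmetricRoots H) {μ : Module.Dual K H}
    (hμ : μ ∈ J.roots H) : J.delta • μ ∈ J.roots H := by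
  rcases J.delta_pm with h | h
  · rwa [h, one_smul]
  · rw [h]
    exact (neg_one_smul K μ).symm ▸ hsym μ hμ

theorem br_mem_rootSpace {γ μ : Module.Dual K H} {x z : L}
    (hx : x ∈ J.rootSpace H γ) (hz : z ∈ J.rootSpace H μ) :
    J.br x z ∈ J.rootSpace H (J.delta • (γ + μ)) := by
  intro h
  rw [J.jacobi, hx h, hz h, map_smul (J.br x), LinearMap.map_smul₂]
  simp only [LinearMap.smul_apply, LinearMap.add_apply, smul_smul, ← add_smul]
  rw [smul_eq_mul, mul_add]

theorem br_mem_rootSpace_of_mem {γ : Module.Dual K H} {w z : L}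
    (hw : w ∈ J.rootSpace H γ) (hz : z ∈ H) : J.br w z ∈ J.rootSpace H γ := by
  rw [J.anti, hw ⟨z, hz⟩]
  exact neg_mem (Submodule.smul_mem _ _ (Submodule.smul_mem _ _ hw))

theorem rootSpace_eq_bot_of_notMem_roots {ν : Module.Dual K H} (h0 : ν ≠ 0)
    (hν : ν ∉ J.roots H) : J.rootSpace H ν = ⊥ :=
  not_not.1 fun hbot => hν ⟨h0, hbot⟩

theorem br_eq_zero_of_notMem_roots {γ μ : Module.Dual K H} {x z : L}
    (hx : x ∈ J.rootSpace H γ) (hz : z ∈ J.rootSpace H μ) (h0 : γ + μ ≠ 0)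
    (hr : J.delta • (γ + μ) ∉ J.roots H) : J.br x z = 0 := by
  have hbot := J.rootSpace_eq_bot_of_notMem_roots (smul_ne_zero J.delta_ne_zero h0) hr
  have h := J.br_mem_rootSpace hx hz
  rwa [hbot, Submodule.mem_bot] at h

variable {J}

theorem IsSplitting.eq_top_of_rootSpace_le (hs : J.IsSplitting H) {P : Submodule K L} (hH : H ≤ P)
    (hroots : ∀ μ ∈ J.roots H, J.rootSpace H μ ≤ P) : P = ⊤ := by
  rw [eq_top_iff, ← hs.decomp]
  refine iSup_le fun μ => ?_
  by_cases h0 : μ = 0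
  · rwa [h0, hs.zero_rootSpace]
  by_cases hμ : μ ∈ J.roots H
  · exact hroots μ hμ
  · simp [J.rootSpace_eq_bot_of_notMem_roots h0 hμ]

end DeltaJordanLie

theorem connSum_update_of_lt {H : Submodule K L} (d : K) (f : ℕ → Module.Dual K H)
    (τ : Module.Dual K H) {m : ℕ} : ∀ {k : ℕ}, k < m →
    connSum d (Function.update f m τ) k = connSum d f k
  | 0, h => Function.update_of_ne h.ne _ _
  | k + 1, h => by
    rw [connSum, connSum, connSum_update_of_lt d f τ (by omega),
      Function.update_of_ne h.ne]

section Connection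

variable {J : DeltaJordanLie K L} {H : Submodule K L} {α β γ μ σ τ : Module.Dual K H}

theorem IsConnection.neg {n : ℕ} {f : ℕ → Module.Dual K H} (hf : IsConnection J H α β n f) :
    IsConnection J H α (-β) n f := by
  obtain ⟨hroots, hstart, hsums, hend⟩ := hf
  exact ⟨hroots, hstart, hsums, by rwa [neg_neg, or_comm]⟩

theorem IsConnection.snoc {n : ℕ} {f : ℕ → Module.Dual K H} (hf : IsConnection J H α β n f)
    (hend : connSum J.delta f n = β) (hβ : β ∈ J.roots H) (hτ : τ ∈ J.roots H) :
    IsConnection J H α (J.delta • (β + τ)) (n + 1) (Function.update f (n + 1) τ) := by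
  obtain ⟨hroots, hstart, hsums, -⟩ := hf
  refine ⟨fun i hi => ?_, ?_, fun k hk => ?_, Or.inl ?_⟩
  · rcases Nat.lt_or_eq_of_le hi with hi | rfl
    · rw [Function.update_of_ne hi.ne]
      exact hroots i (by omega)
    · rwa [Function.update_self]
  · rwa [Function.update_of_ne (Nat.succ_ne_zero n).symm]
  · rw [connSum_update_of_lt _ _ _ hk]
    rcases Nat.lt_succ_iff_lt_or_eq.1 hk with hk | rfl
    · exact hsums k hk
    · rwa [hend]
  · rw [connSum, connSum_update_of_lt _ _ _ (Nat.lt_succ_self n), Function.update_self, hend]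

theorem Connected.refl (hα : α ∈ J.roots H) : Connected J H α α :=
  ⟨0, fun _ => α, fun _ _ => hα, rfl, fun _ hk => absurd hk (Nat.not_lt_zero _), Or.inl rfl⟩

theorem Connected.neg (h : Connected J H α β) : Connected J H α (-β) :=
  let ⟨n, f, hf⟩ := h
  ⟨n, f, hf.neg⟩

theorem Connected.delta_smul_add (hsym : J.SymmetricRoots H) (h : Connected J H α σ)
    (hσ : σ ∈ J.roots H) (hτ : τ ∈ J.roots H) : Connected J H α (J.delta • (σ + τ)) := by
  obtain ⟨n, f, hf⟩ := h
  rcases hf.2.2.2 with hend | hend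
  · exact ⟨_, _, hf.snoc hend hσ hτ⟩
  · have h := (hf.neg.snoc hend (hsym σ hσ) (hsym τ hτ)).neg
    rw [← neg_add, smul_neg, neg_neg] at h
    exact ⟨_, _, h⟩

theorem mem_connectedRoots_self (hα : α ∈ J.roots H) : α ∈ connectedRoots J H α :=
  ⟨hα, Connected.refl hα⟩

theorem neg_mem_connectedRoots (hsym : J.SymmetricRoots H) (hγ : γ ∈ connectedRoots J H α) :
    -γ ∈ connectedRoots J H α :=
  ⟨hsym γ hγ.1, hγ.2.neg⟩

theorem delta_smul_add_mem_connectedRoots (hsym : J.SymmetricRoots H)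
    (hγ : γ ∈ connectedRoots J H α) (hμ : μ ∈ J.roots H)
    (hν : J.delta • (γ + μ) ∈ J.roots H) : J.delta • (γ + μ) ∈ connectedRoots J H α :=
  ⟨hν, hγ.2.delta_smul_add hsym hγ.1 hμ⟩

theorem mem_connectedRoots_of_delta_smul_add_mem (hsym : J.SymmetricRoots H)
    (hν : J.delta • (σ + μ) ∈ connectedRoots J H α) (hσ : σ ∈ J.roots H)
    (hμ : μ ∈ J.roots H) : μ ∈ connectedRoots J H α := by
  have h := hν.2.delta_smul_add hsym hν.1 (hsym _ (J.delta_smul_mem_roots hsym hσ))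
  rw [smul_add, J.delta_smul_delta_smul, smul_neg, J.delta_smul_delta_smul,
    add_neg_cancel_comm] at h
  exact ⟨hμ, h⟩

/-- Here `δ(γ + μ)` can be neither `0` (then `μ = -γ ∈ Λ_α`) nor a root (then `μ ∈ Λ_α`). -/
theorem br_eq_zero_of_mem_connectedRoots_of_notMem (hsym : J.SymmetricRoots H)
    (hγ : γ ∈ connectedRoots J H α) (hμ : μ ∈ J.roots H) (hμS : μ ∉ connectedRoots J H α)
    {x z : L} (hx : x ∈ J.rootSpace H γ) (hz : z ∈ J.rootSpace H μ) : J.br x z = 0 := by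
  refine J.br_eq_zero_of_notMem_roots hx hz (fun h => hμS ?_) (fun hr => hμS ?_)
  · rw [eq_neg_of_add_eq_zero_right h]
    exact neg_mem_connectedRoots hsym hγ
  · exact mem_connectedRoots_of_delta_smul_add_mem hsym
      (delta_smul_add_mem_connectedRoots hsym hγ hμ hr) hγ.1 hμ

theorem br_br_eq_zero_of_mem_connectedRoots_of_notMem (hsym : J.SymmetricRoots H)
    (hγ : γ ∈ connectedRoots J H α) (hμ : μ ∈ J.roots H) (hμS : μ ∉ connectedRoots J H α)
    {x y z : L} (hx : x ∈ J.rootSpace H γ) (hy : y ∈ J.rootSpace H (-γ))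
    (hz : z ∈ J.rootSpace H μ) : J.br (J.br x y) z = 0 := by
  have hj := J.jacobi x y z
  rw [br_eq_zero_of_mem_connectedRoots_of_notMem hsym (neg_mem_connectedRoots hsym hγ) hμ hμS
      hy hz, br_eq_zero_of_mem_connectedRoots_of_notMem hsym hγ hμ hμS hx hz, map_zero,
    map_zero, smul_zero, add_zero] at hj
  exact (smul_eq_zero.1 hj.symm).resolve_left J.delta_ne_zero

end Connection

section Ideal

variable {J : DeltaJordanLie K L} {H : Submodule K L}

theorem rootSpan_le (hs : J.IsSplitting H) (S : Set (Module.Dual K H)) :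
    rootSpan J H S ≤ H := by
  refine (Submodule.span_le.2 ?_).trans hs.zero_rootSpace.le
  rintro w ⟨γ, -, u, hu, v, hv, rfl⟩
  simpa using J.br_mem_rootSpace hu hv

theorem rootSpace_le_decIdeal {S : Set (Module.Dual K H)} {γ : Module.Dual K H} (hγ : γ ∈ S) :
    J.rootSpace H γ ≤ decIdeal J H S :=
  (le_biSup (fun β => J.rootSpace H β) hγ).trans le_sup_right

theorem decIdeal_le_biSup (hs : J.IsSplitting H) (S : Set (Module.Dual K H)) :
    decIdeal J H S ≤ ⨆ γ ∈ insert 0 S, J.rootSpace H γ := by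
  refine sup_le ((rootSpan_le hs S).trans ?_) (biSup_mono fun _ => Set.mem_insert_of_mem 0)
  exact hs.zero_rootSpace.ge.trans (le_biSup (fun γ => J.rootSpace H γ) (Set.mem_insert 0 S))

theorem decIdeal_le_comap_of_mem (hs : J.IsSplitting H) (S : Set (Module.Dual K H)) {z : L}
    (hz : z ∈ H) : decIdeal J H S ≤ (decIdeal J H S).comap (J.br.flip z) := by
  refine sup_le (fun w hw => ?_) (iSup₂_le fun γ hγ w hw => ?_)
  · change J.br w z ∈ decIdeal J H S
    rw [hs.abelian w (rootSpan_le hs S hw) z hz]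
    exact zero_mem _
  · exact rootSpace_le_decIdeal hγ (J.br_mem_rootSpace_of_mem hw hz)

theorem decIdeal_connectedRoots_le_comap_of_mem_rootSpace (hs : J.IsSplitting H)
    (hsym : J.SymmetricRoots H) {α μ : Module.Dual K H} (hμ : μ ∈ J.roots H) {z : L}
    (hz : z ∈ J.rootSpace H μ) :
    decIdeal J H (connectedRoots J H α) ≤
      (decIdeal J H (connectedRoots J H α)).comap (J.br.flip z) := by
  set S := connectedRoots J H α
  refine sup_le (Submodule.span_le.2 ?_) (iSup₂_le fun γ hγ w hw => ?_)
  · rintro _ ⟨γ, hγ, u, hu, v, hv, rfl⟩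
    change J.br (J.br u v) z ∈ decIdeal J H S
    by_cases hμS : μ ∈ S
    · have hH : J.br u v ∈ H :=
        rootSpan_le hs S (Submodule.subset_span ⟨γ, hγ, u, hu, v, hv, rfl⟩)
      have h : J.br (J.br u v) z = μ ⟨_, hH⟩ • z := hz ⟨_, hH⟩
      rw [h]
      exact Submodule.smul_mem _ _ (rootSpace_le_decIdeal hμS hz)
    · rw [br_br_eq_zero_of_mem_connectedRoots_of_notMem hsym hγ hμ hμS hu hv hz]
      exact zero_mem _
  · change J.br w z ∈ decIdeal J H S
    by_cases hsum : γ + μ = 0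
    · obtain rfl : μ = -γ := eq_neg_of_add_eq_zero_right hsum
      exact Submodule.mem_sup_left (Submodule.subset_span ⟨γ, hγ, w, hw, z, hz, rfl⟩)
    by_cases hr : J.delta • (γ + μ) ∈ J.roots H
    · exact rootSpace_le_decIdeal (delta_smul_add_mem_connectedRoots hsym hγ hμ hr)
        (J.br_mem_rootSpace hw hz)
    · rw [J.br_eq_zero_of_notMem_roots hw hz hsum hr]
      exact zero_mem _

theorem isIdeal_decIdeal_connectedRoots (hs : J.IsSplitting H) (hsym : J.SymmetricRoots H)
    (α : Module.Dual K H) : IsIdeal J (decIdeal J H (connectedRoots J H α)) := by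
  intro x hx y
  set I := decIdeal J H (connectedRoots J H α)
  have hright : ∀ y, J.br x y ∈ I :=
    Submodule.eq_top_iff'.1 <| hs.eq_top_of_rootSpace_le (P := I.comap (J.br x))
      (fun z hz => decIdeal_le_comap_of_mem hs _ hz hx)
      fun μ hμ z hz => decIdeal_connectedRoots_le_comap_of_mem_rootSpace hs hsym hμ hz hx
  refine ⟨hright y, ?_⟩
  rw [J.anti]
  exact neg_mem (Submodule.smul_mem _ _ (hright y))

end Ideal

/-- if `L` is simple then any two nonzero roots are connected. -/
theorem stmt8 (J : DeltaJordanLie K L) (H : Submodule K L) (hs : J.IsSplitting H)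
    (hsym : J.SymmetricRoots H)
    (hsimple : (∃ x y : L, J.br x y ≠ 0) ∧
      ∀ I : Submodule K L, IsIdeal J I → I = ⊥ ∨ I = ⊤) :
    ∀ α ∈ J.roots H, ∀ β ∈ J.roots H, Connected J H α β := by
  intro α hα β hβ
  by_contra hαβ
  set S := connectedRoots J H α
  have hI : decIdeal J H S = ⊤ := by
    refine (hsimple.2 _ (isIdeal_decIdeal_connectedRoots hs hsym α)).resolve_left fun hbot => ?_
    exact hα.2 (le_bot_iff.1 (hbot ▸ rootSpace_le_decIdeal (mem_connectedRoots_self hα)))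
  have hβS : β ∉ insert 0 S := by
    rintro (h | h)
    exacts [hβ.1 h, hαβ h.2]
  refine hβ.2 ((hs.indep.disjoint_biSup hβS).eq_bot_of_le ?_)
  exact le_top.trans (hI.ge.trans (decIdeal_le_biSup hs S))
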